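/- For all n ∈ ℤ₊, F_n(a,q;x) = (-1)^n q^{-n(n-1)/2} ∑_{j=0}^n [ (-1)^j q^{j(j-1)/2} / (q;q)_j² · ( ∑_{k=0}^{n-j} (q^{k+1};q)_j (q^{n-j-k+1};q)_j a^k ) ] x^j. -/
import Mathlib


open Finset

/-- Finite q-Pochhammer symbol `(z;q)_k = ∏_{j<k} (1 - z qʲ)`. -/
noncomputable def qPoch (z q : ℂ) (k : ℕ) : ℂ := ∏ j ∈ range k, (1 - z * q ^ j)

noncomputable def qT (A Q : ℂ) (m j : ℕ) : ℂ :=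
  ∑ k ∈ range (m + 1), qPoch (Q ^ (k + 1)) Q j * qPoch (Q ^ (m - k + 1)) Q j * A ^ k

lemma qPoch_succ (z q : ℂ) (k : ℕ) : qPoch z q (k+1) = qPoch z q k * (1 - z * q^k) :=
  prod_range_succ _ _

lemma qPoch_succ' (z q : ℂ) (k : ℕ) : qPoch z q (k+1) = (1 - z) * qPoch (z*q) q k := by
  rw [qPoch, prod_range_succ']
  simp only [pow_zero, mul_one]
  rw [mul_comm]
  congr 1
  exact prod_congr rfl fun i _ => by rw [pow_succ]; ring

lemma qPoch_one_eq_zero (q : ℂ) (j : ℕ) : qPoch 1 q (j+1) = 0 := by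
  rw [qPoch_succ']; simp

lemma key1 (Q : ℂ) (k j : ℕ) :
    qPoch (Q^(k+1)) Q (j+1) - qPoch (Q^k) Q (j+1)
      = Q^k * (1 - Q^(j+1)) * qPoch (Q^(k+1)) Q j := by
  have h1 : qPoch (Q^k) Q (j+1) = (1 - Q^k) * qPoch (Q^(k+1)) Q j := by
    rw [qPoch_succ', ← pow_succ]
  have h2 : qPoch (Q^(k+1)) Q (j+1) = qPoch (Q^(k+1)) Q j * (1 - Q^(k+1) * Q^j) :=
    qPoch_succ _ _ _
  rw [h1, h2]
  simp only [pow_succ]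
  ring

lemma qPoch_pow_zero (Q : ℂ) (j : ℕ) : qPoch (Q^0) Q (j+1) = 0 := by
  rw [pow_zero]; exact qPoch_one_eq_zero Q j

lemma LT2 (A Q : ℂ) (m j : ℕ) :
    qT A Q (m+2) (j+1)
      = Q^(m+2) * (1 - Q^(j+1))^2 * qT A Q (m+2) j
        + (A+1) * qT A Q (m+1) (j+1) - A * qT A Q m (j+1) := by
  set P : ℕ → ℂ := fun k => qPoch (Q^k) Q (j+1) with hP
  have hP0 : P 0 = 0 := qPoch_pow_zero Q j
  have hsum : ∑ k ∈ range (m+3), (P (k+1) - P k) * (P (m+2-k+1) - P (m+2-k)) * A^k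
      = Q^(m+2) * (1-Q^(j+1))^2 * qT A Q (m+2) j := by
    rw [qT, mul_sum]
    refine sum_congr rfl fun k hk => ?_
    have hk' : k ≤ m + 2 := by simpa [Nat.lt_succ_iff] using hk
    have hQQ : Q^k * Q^(m+2-k) = Q^(m+2) := by
      rw [← pow_add]; congr 1; omega
    rw [hP, key1 Q k j, key1 Q (m+2-k) j, ← hQQ]
    ring
  have hexp : ∑ k ∈ range (m+3), (P (k+1) - P k) * (P (m+2-k+1) - P (m+2-k)) * A^k
      = qT A Q (m+2) (j+1) - A * qT A Q (m+1) (j+1) - qT A Q (m+1) (j+1)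
        + A * qT A Q m (j+1) := by
    have e1 : ∀ k ∈ range (m+3), (P (k+1) - P k) * (P (m+2-k+1) - P (m+2-k)) * A^k
        = P (k+1) * P (m+2-k+1) * A^k - P k * P (m+2-k+1) * A^k
          - P (k+1) * P (m+2-k) * A^k + P k * P (m+2-k) * A^k := fun k _ => by ring
    rw [sum_congr rfl e1]
    simp only [sum_add_distrib, sum_sub_distrib]
    have hS1 : ∑ k ∈ range (m+3), P (k+1) * P (m+2-k+1) * A^k = qT A Q (m+2) (j+1) := rfl
    have hS2 : ∑ k ∈ range (m+3), P k * P (m+2-k+1) * A^k = A * qT A Q (m+1) (j+1) := by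
      rw [sum_range_succ', qT, mul_sum]
      simp only [hP0, zero_mul, add_zero]
      refine sum_congr rfl fun k hk => ?_
      have : m + 2 - (k+1) = m + 1 - k := by omega
      rw [this, pow_succ]
      ring
    have hS3 : ∑ k ∈ range (m+3), P (k+1) * P (m+2-k) * A^k = qT A Q (m+1) (j+1) := by
      rw [sum_range_succ]
      have : m + 2 - (m + 2) = 0 := by omega
      rw [this, hP0]
      simp only [mul_zero, zero_mul, add_zero]
      refine sum_congr rfl fun k hk => ?_
      have hk' : k < m + 2 := mem_range.mp hk
      have : m + 2 - k = m + 1 - k + 1 := by omega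
      rw [this]
    have hS4 : ∑ k ∈ range (m+3), P k * P (m+2-k) * A^k = A * qT A Q m (j+1) := by
      rw [sum_range_succ]
      have h0 : m + 2 - (m + 2) = 0 := by omega
      rw [h0, hP0]
      simp only [mul_zero, zero_mul, add_zero]
      rw [sum_range_succ', qT, mul_sum]
      simp only [hP0, zero_mul, add_zero]
      refine sum_congr rfl fun k hk => ?_
      have hk' : k < m + 1 := mem_range.mp hk
      have : m + 2 - (k+1) = m - k + 1 := by omega
      rw [this, pow_succ]
      ring
    rw [hS1, hS2, hS3, hS4]
  rw [hexp] at hsum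
  linear_combination hsum

lemma qT_one (A Q : ℂ) (j : ℕ) :
    qT A Q 1 j = (1+A) * (qPoch Q Q j * qPoch (Q^2) Q j) := by
  rw [qT, sum_range_succ, sum_range_succ, sum_range_zero]
  norm_num
  ring

lemma qT_zero (A Q : ℂ) (j : ℕ) : qT A Q 0 j = qPoch Q Q j ^ 2 := by
  rw [qT, sum_range_succ, sum_range_zero]
  norm_num
  ring

lemma key1' (Q : ℂ) (j : ℕ) :
    qPoch (Q^2) Q (j+1) - qPoch Q Q (j+1) = Q * (1-Q^(j+1)) * qPoch (Q^2) Q j := by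
  have h := key1 Q 1 j
  norm_num at h
  exact h

lemma qPoch_step (Q : ℂ) (j : ℕ) :
    qPoch Q Q (j+1) = qPoch Q Q j * (1 - Q^(j+1)) := by
  rw [qPoch_succ, ← pow_succ']

lemma LT1 (A Q : ℂ) (j : ℕ) :
    qT A Q 1 (j+1) = Q * (1-Q^(j+1))^2 * qT A Q 1 j + (A+1) * qT A Q 0 (j+1) := by
  rw [qT_one, qT_one, qT_zero]
  have hY : qPoch (Q^2) Q (j+1)
      = qPoch Q Q (j+1) + Q * (1-Q^(j+1)) * qPoch (Q^2) Q j := by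
    linear_combination key1' Q j
  rw [hY, qPoch_step]
  ring

lemma LT0 (A Q : ℂ) (j : ℕ) :
    qT A Q 0 (j+1) = (1-Q^(j+1))^2 * qT A Q 0 j := by
  rw [qT_zero, qT_zero, qPoch_step]
  ring

lemma LT2zero (A Q : ℂ) (m : ℕ) :
    qT A Q (m+2) 0 = (A+1) * qT A Q (m+1) 0 - A * qT A Q m 0 := by
  have h : ∀ M : ℕ, qT A Q M 0 = ∑ k ∈ range (M+1), A^k := by
    intro M
    refine sum_congr rfl fun k _ => ?_
    simp [qPoch]
  rw [h, h, h, sum_range_succ (n := m+2), sum_range_succ (n := m+1)]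
  ring

lemma hQne {q : ℝ} (hq0 : 0 < q) : (q : ℂ) ≠ 0 := by
  exact_mod_cast hq0.ne'

lemma hpow_ne {q : ℝ} (hq0 : 0 < q) (hq1 : q < 1) (j : ℕ) : 1 - (q:ℂ)^(j+1) ≠ 0 := by
  have h1 : q^(j+1) < 1 := pow_lt_one₀ hq0.le hq1 (Nat.succ_ne_zero j)
  have : ((1 - q^(j+1) : ℝ) : ℂ) ≠ 0 := by
    exact_mod_cast (by linarith : (1:ℝ) - q^(j+1) ≠ 0)
  simpa [sub_ne_zero] using this

lemma hPoch_ne {q : ℝ} (hq0 : 0 < q) (hq1 : q < 1) (j : ℕ) : qPoch q q j ≠ 0 := by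
  rw [qPoch]
  refine prod_ne_zero_iff.mpr fun i _ => ?_
  have : (q:ℂ) * (q:ℂ)^i = (q:ℂ)^(i+1) := (pow_succ' _ _).symm
  rw [this]
  exact hpow_ne hq0 hq1 i

noncomputable def bC (q : ℝ) (j : ℕ) : ℂ :=
  (-1)^j * (q:ℂ)^(j*(j-1)/2) / (qPoch q q j)^2

lemma T2_succ (n : ℕ) : (n+1)*((n+1)-1)/2 = n*(n-1)/2 + n := by
  rw [← Finset.sum_range_id, ← Finset.sum_range_id, sum_range_succ]

lemma bstep {q : ℝ} (hq0 : 0 < q) (hq1 : q < 1) (i : ℕ) :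
    bC q (i+1) * (1 - (q:ℂ)^(i+1))^2 = -(q:ℂ)^i * bC q i := by
  have h1 := hPoch_ne hq0 hq1 i
  have h2 := hpow_ne hq0 hq1 i
  rw [bC, bC, T2_succ, qPoch_step]
  field_simp
  ring

noncomputable def cC (a q : ℝ) (n j : ℕ) : ℂ := bC q j * qT (a:ℂ) (q:ℂ) (n-j) j

lemma coeff_zero {q : ℝ} (a : ℝ) (n : ℕ) :
    cC a q (n+2) 0 = ((a:ℂ)+1) * cC a q (n+1) 0 - (a:ℂ) * cC a q n 0 := by
  have hb : bC q 0 = 1 := by simp [bC, qPoch]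
  simp only [cC, hb, one_mul, Nat.sub_zero]
  exact LT2zero _ _ _

lemma coeff_main {q : ℝ} (hq0 : 0 < q) (hq1 : q < 1) (a : ℝ) (n i : ℕ) (hi : i + 1 ≤ n) :
    cC a q (n+2) (i+1) = -(q:ℂ)^(n+1) * cC a q (n+1) i
      + ((a:ℂ)+1) * cC a q (n+1) (i+1) - (a:ℂ) * cC a q n (i+1) := by
  obtain ⟨m, hm⟩ : ∃ m, n = i + 1 + m := ⟨n - (i+1), by omega⟩
  subst hm
  have h1 : i + 1 + m + 2 - (i + 1) = m + 2 := by omega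
  have h2 : i + 1 + m + 1 - i = m + 2 := by omega
  have h3 : i + 1 + m + 1 - (i + 1) = m + 1 := by omega
  have h4 : i + 1 + m - (i + 1) = m := by omega
  simp only [cC, h1, h2, h3, h4]
  rw [LT2]
  have hq : (q:ℂ)^(i+1+m+1) = (q:ℂ)^(m+2) * (q:ℂ)^i := by
    rw [← pow_add]; congr 1; omega
  rw [hq]
  linear_combination ((q:ℂ)^(m+2) * qT (a:ℂ) (q:ℂ) (m+2) i) * bstep hq0 hq1 i

lemma coeff_top1 {q : ℝ} (hq0 : 0 < q) (hq1 : q < 1) (a : ℝ) (n : ℕ) :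
    cC a q (n+2) (n+1) = -(q:ℂ)^(n+1) * cC a q (n+1) n
      + ((a:ℂ)+1) * cC a q (n+1) (n+1) := by
  have h1 : n + 2 - (n + 1) = 1 := by omega
  have h2 : n + 1 - n = 1 := by omega
  have h3 : n + 1 - (n + 1) = 0 := by omega
  simp only [cC, h1, h2, h3]
  rw [LT1]
  have hq : (q:ℂ)^(n+1) = (q:ℂ) * (q:ℂ)^n := by
    rw [← pow_succ']
  rw [hq]
  linear_combination ((q:ℂ) * qT (a:ℂ) (q:ℂ) 1 n) * bstep hq0 hq1 n

lemma coeff_top0 {q : ℝ} (hq0 : 0 < q) (hq1 : q < 1) (a : ℝ) (n : ℕ) :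
    cC a q (n+2) (n+2) = -(q:ℂ)^(n+1) * cC a q (n+1) (n+1) := by
  have h1 : n + 2 - (n + 2) = 0 := by omega
  have h2 : n + 1 - (n + 1) = 0 := by omega
  simp only [cC, h1, h2]
  rw [LT0]
  linear_combination (qT (a:ℂ) (q:ℂ) 0 (n+1)) * bstep hq0 hq1 (n+1)

lemma keysum {q : ℝ} (hq0 : 0 < q) (hq1 : q < 1) (a : ℝ) (x : ℂ) (n : ℕ) :
    ∑ j ∈ range (n+3), cC a q (n+2) j * x^j
      = -(q:ℂ)^(n+1) * x * ∑ j ∈ range (n+2), cC a q (n+1) j * x^j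
        + ((a:ℂ)+1) * ∑ j ∈ range (n+2), cC a q (n+1) j * x^j
        - (a:ℂ) * ∑ j ∈ range (n+1), cC a q n j * x^j := by
  have e1 : ∑ j ∈ range (n+3), cC a q (n+2) j * x^j
      = (∑ j ∈ range (n+1), cC a q (n+2) j * x^j)
        + cC a q (n+2) (n+1) * x^(n+1) + cC a q (n+2) (n+2) * x^(n+2) := by
    rw [sum_range_succ, sum_range_succ]
  have e2 : ∑ j ∈ range (n+1), cC a q (n+2) j * x^j
      = -(q:ℂ)^(n+1) * x * (∑ j ∈ range n, cC a q (n+1) j * x^j)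
        + ((a:ℂ)+1) * ∑ j ∈ range (n+1), cC a q (n+1) j * x^j
        - (a:ℂ) * ∑ j ∈ range (n+1), cC a q n j * x^j := by
    have hsplit : ∀ j ∈ range (n+1), cC a q (n+2) j * x^j
        = (if j = 0 then 0 else -(q:ℂ)^(n+1) * cC a q (n+1) (j-1) * x^j)
          + (((a:ℂ)+1) * (cC a q (n+1) j * x^j) - (a:ℂ) * (cC a q n j * x^j)) := by
      intro j hj
      match j with
      | 0 =>
        rw [if_pos rfl]
        linear_combination (x^(0:ℕ)) * coeff_zero (q := q) a n
      | i+1 =>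
        have hi : i + 1 ≤ n := by
          have := mem_range.mp hj; omega
        rw [if_neg (Nat.succ_ne_zero i)]
        simp only [Nat.add_sub_cancel]
        linear_combination (x^(i+1)) * coeff_main hq0 hq1 a n i hi
    rw [sum_congr rfl hsplit, sum_add_distrib, sum_sub_distrib, ← mul_sum, ← mul_sum]
    have hshift : ∑ j ∈ range (n+1),
        (if j = 0 then 0 else -(q:ℂ)^(n+1) * cC a q (n+1) (j-1) * x^j)
        = -(q:ℂ)^(n+1) * x * ∑ j ∈ range n, cC a q (n+1) j * x^j := by
      rw [sum_range_succ']
      rw [if_pos rfl, add_zero]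
      rw [mul_sum]
      refine sum_congr rfl fun j hj => ?_
      rw [if_neg (Nat.succ_ne_zero j)]
      simp only [Nat.add_sub_cancel]
      rw [pow_succ]
      ring
    rw [hshift]
    ring
  have e3 : ∑ j ∈ range (n+1), cC a q (n+1) j * x^j
      = (∑ j ∈ range n, cC a q (n+1) j * x^j) + cC a q (n+1) n * x^n :=
    sum_range_succ _ _
  have e4 : ∑ j ∈ range (n+2), cC a q (n+1) j * x^j
      = (∑ j ∈ range (n+1), cC a q (n+1) j * x^j) + cC a q (n+1) (n+1) * x^(n+1) :=
    sum_range_succ _ _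
  rw [e1, e2, e4, e3]
  linear_combination (x^(n+1)) * coeff_top1 hq0 hq1 a n + (x^(n+2)) * coeff_top0 hq0 hq1 a n

noncomputable def Gf (a q : ℝ) (x : ℂ) (n : ℕ) : ℂ :=
  (-1)^n * (q:ℂ)^(-(n * (n - 1) / 2 : ℕ) : ℤ) * ∑ j ∈ range (n+1), cC a q n j * x^j

lemma G0 (a q : ℝ) (x : ℂ) : Gf a q x 0 = 1 := by
  simp [Gf, cC, bC, qT, qPoch]

lemma G1 {q : ℝ} (hq0 : 0 < q) (hq1 : q < 1) (a : ℝ) (x : ℂ) :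
    Gf a q x 1 = x - ((a:ℂ) + 1) := by
  have h := hpow_ne hq0 hq1 0
  rw [pow_one] at h
  simp [Gf, cC, bC, qT, qPoch, sum_range_succ]
  field_simp
  ring

lemma Grec {q : ℝ} (hq0 : 0 < q) (hq1 : q < 1) (a : ℝ) (x : ℂ) (n : ℕ) :
    Gf a q x (n+2) = (x - ((a:ℂ) + 1) * (q:ℂ) ^ (-(n + 1 : ℤ))) * Gf a q x (n+1)
      - (a:ℂ) * (q:ℂ) ^ (-2 * (n + 1 : ℤ) + 1) * Gf a q x n := by
  have hQ : (q:ℂ) ≠ 0 := hQne hq0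
  have h1 : (n+1) * ((n+1) - 1) / 2 = n * (n-1) / 2 + n := T2_succ n
  have h2 : (n+2) * ((n+2) - 1) / 2 = n * (n-1) / 2 + (2*n+1) := by
    have ha := T2_succ (n+1)
    have hb := T2_succ n
    rw [show n+1+1 = n+2 by omega] at ha
    omega
  rw [Gf, Gf, Gf, h1, h2, keysum hq0 hq1 a x n]
  have e : ∀ k : ℕ, (q:ℂ)^(-(k:ℕ) : ℤ) = ((q:ℂ)^k)⁻¹ := fun k => by
    rw [zpow_neg, zpow_natCast]
  rw [e, e, e]
  have e1 : (q:ℂ)^(-(n + 1 : ℤ)) = ((q:ℂ)^(n+1))⁻¹ := by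
    rw [show (-(n + 1 : ℤ)) = -((n+1 : ℕ) : ℤ) by push_cast; ring, zpow_neg, zpow_natCast]
  have e2 : (q:ℂ)^(-2 * (n + 1 : ℤ) + 1) = ((q:ℂ)^(2*n+1))⁻¹ := by
    rw [show (-2 * (n + 1 : ℤ) + 1) = -((2*n+1 : ℕ) : ℤ) by push_cast; ring, zpow_neg,
      zpow_natCast]
  rw [e1, e2]
  have hp : ∀ k : ℕ, (q:ℂ)^k ≠ 0 := fun k => pow_ne_zero k hQ
  field_simp
  ring


/-- Explicit formula for the q-Lommel polynomials `Fₙ(a,q;x)`. -/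
theorem stmt6 (a q : ℝ) (ha : 0 < a) (hq0 : 0 < q) (hq1 : q < 1) (x : ℂ)
    (F : ℕ → ℂ)
    (hF0 : F 0 = 1) (hF1 : F 1 = x - ((a : ℂ) + 1))
    (hFrec : ∀ n : ℕ, F (n + 2) =
      (x - ((a : ℂ) + 1) * (q : ℂ) ^ (-(n + 1 : ℤ))) * F (n + 1)
        - (a : ℂ) * (q : ℂ) ^ (-2 * (n + 1 : ℤ) + 1) * F n) :
    ∀ n : ℕ, F n = (-1) ^ n * (q : ℂ) ^ (-(n * (n - 1) / 2 : ℕ) : ℤ) *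
      ∑ j ∈ range (n + 1),
        ((-1) ^ j * (q : ℂ) ^ (j * (j - 1) / 2 : ℕ) / (qPoch q q j) ^ 2
          * (∑ k ∈ range (n - j + 1),
              qPoch ((q : ℂ) ^ (k + 1)) q j * qPoch ((q : ℂ) ^ (n - j - k + 1)) q j
                * (a : ℂ) ^ k)) * x ^ j := by
  have key : ∀ n, F n = Gf a q x n ∧ F (n+1) = Gf a q x (n+1) := by
    intro n
    induction n with
    | zero => exact ⟨by rw [hF0, G0], by rw [hF1, G1 hq0 hq1]⟩
    | succ n ih =>
      refine ⟨ih.2, ?_⟩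
      rw [hFrec n, ih.1, ih.2, ← Grec hq0 hq1 a x n]
  intro n
  have h := (key n).1
  simpa only [Gf, cC, bC, qT] using h
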